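/- Let A ⊆ B ⊆ {1,…,N} with |A| ≥ γ·N, let γ ∈ (1/2, 1], ℓ ∈ (0, 2·arccos((1−γ)/γ)), and κ > D(Ω_B)/(γ·sin ℓ − 2(1−γ)·sin(ℓ/2)), and let θ be a Kuramoto solution with D(Θ_A(0)) ≤ ℓ. Then the ensemble Θ_B is partially phase-locked: sup_{t ≥ 0} D(Θ_B(t)) < ∞. -/

import Mathlib

/-!
The majority ensemble `A` is trapped in an arc of length `ℓ`: when two of its oscillators are
exactly `ℓ` apart, the `γ`-majority inside the arc pulls them together with strength at least
`κ (γ sin ℓ - 2(1-γ) sin (ℓ/2))`, which beats the spread of natural frequencies. The same estimate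
applies to an oscillator `i ∈ B` sitting at distance `ℓ + 2πm` above the lowest oscillator of `A`,
since the coupling only sees phases modulo `2π`; so `θ i - θ k` (`k ∈ A`) never crosses the first
such level above its initial values. Applied to `-θ`, this bounds `θ i - θ k` from below too, and
going through an oscillator of `A` bounds the diameter of `B`.
-/

/-- A Kuramoto solution on `[0,∞)` (modeled as a function on ℝ whose ODE holds on `Set.Ici 0`). -/
def IsKuramotoOn {N : ℕ} (κ : ℝ) (ν : Fin N → ℝ) (θ : ℝ → Fin N → ℝ) : Prop :=
  ∀ (i : Fin N), ∀ t ∈ Set.Ici (0 : ℝ), HasDerivWithinAt (fun s => θ s i)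
    (ν i + κ / N * ∑ j, Real.sin (θ t j - θ t i)) (Set.Ici 0) t

/-- Diameter of a sub-ensemble: `max_{i,j ∈ A} |x i - x j|`. -/
noncomputable def diam {N : ℕ} (A : Finset (Fin N)) (x : Fin N → ℝ) : ℝ :=
  sSup {d : ℝ | ∃ i ∈ A, ∃ j ∈ A, d = |x i - x j|}

open Real Set Filter Topology

noncomputable section

def kuramotoField {N : ℕ} (κ : ℝ) (ν x : Fin N → ℝ) (i : Fin N) : ℝ :=
  ν i + κ / N * ∑ j, sin (x j - x i)

def lockingMargin (γ ℓ : ℝ) : ℝ :=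
  γ * sin ℓ - 2 * (1 - γ) * sin (ℓ / 2)

end

section Diam

variable {N : ℕ} {S T : Finset (Fin N)} {x : Fin N → ℝ} {m : ℝ} {i j : Fin N}

theorem diam_bddAbove (S : Finset (Fin N)) (x : Fin N → ℝ) :
    BddAbove {d : ℝ | ∃ i ∈ S, ∃ j ∈ S, d = |x i - x j|} := by
  refine ((finite_range fun p : Fin N × Fin N => |x p.1 - x p.2|).subset ?_).bddAbove
  rintro d ⟨i, -, j, -, rfl⟩
  exact ⟨(i, j), rfl⟩

theorem abs_sub_le_diam (x : Fin N → ℝ) (hi : i ∈ S) (hj : j ∈ S) : |x i - x j| ≤ diam S x :=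
  le_csSup (diam_bddAbove S x) ⟨i, hi, j, hj, rfl⟩

theorem sub_le_diam (x : Fin N → ℝ) (hi : i ∈ S) (hj : j ∈ S) : x i - x j ≤ diam S x :=
  (le_abs_self _).trans (abs_sub_le_diam x hi hj)

theorem diam_nonneg (S : Finset (Fin N)) (x : Fin N → ℝ) : 0 ≤ diam S x :=
  Real.sSup_nonneg (by rintro d ⟨i, -, j, -, rfl⟩; exact abs_nonneg _)

theorem diam_le (hm : 0 ≤ m) (h : ∀ i ∈ S, ∀ j ∈ S, |x i - x j| ≤ m) : diam S x ≤ m :=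
  Real.sSup_le (by rintro d ⟨i, hi, j, hj, rfl⟩; exact h i hi j hj) hm

theorem diam_le_iff (hm : 0 ≤ m) : diam S x ≤ m ↔ ∀ i ∈ S, ∀ j ∈ S, x i - x j ≤ m :=
  ⟨fun h _ hi _ hj => (sub_le_diam x hi hj).trans h,
    fun h => diam_le hm fun i hi j hj => abs_sub_le_iff.2 ⟨h i hi j hj, h j hj i hi⟩⟩

theorem diam_mono (h : S ⊆ T) (x : Fin N → ℝ) : diam S x ≤ diam T x :=
  diam_le (diam_nonneg T x) fun _ hi _ hj => abs_sub_le_diam x (h hi) (h hj)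

theorem diam_neg (S : Finset (Fin N)) (x : Fin N → ℝ) : diam S (-x) = diam S x := by
  have key : ∀ y : Fin N → ℝ, diam S (-y) ≤ diam S y := fun y =>
    (diam_le_iff (diam_nonneg S y)).2 fun i hi j hj => by
      simpa only [Pi.neg_apply, neg_sub_neg] using sub_le_diam y hj hi
  exact le_antisymm (key x) (by simpa only [neg_neg] using key (-x))

theorem exists_forall_diam_le {α : Type*} {U : Set α} {x : α → Fin N → ℝ}
    (h : ∀ i ∈ S, ∀ j ∈ S, ∃ M, ∀ t ∈ U, x t i - x t j ≤ M) :
    ∃ M, ∀ t ∈ U, diam S (x t) ≤ M := by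
  have hev : ∀ᶠ M in atTop, 0 ≤ M ∧ ∀ p ∈ S ×ˢ S, ∀ t ∈ U, x t p.1 - x t p.2 ≤ M := by
    refine (eventually_ge_atTop 0).and ((eventually_all_finset _).2 fun p hp => ?_)
    obtain ⟨M, hM⟩ := h p.1 (Finset.mem_product.1 hp).1 p.2 (Finset.mem_product.1 hp).2
    exact eventually_atTop.2 ⟨M, fun M' hM' t ht => (hM t ht).trans hM'⟩
  obtain ⟨M, hM₀, hM⟩ := hev.exists
  exact ⟨M, fun t ht => (diam_le_iff hM₀).2 fun i hi j hj =>
    hM (i, j) (Finset.mem_product.2 ⟨hi, hj⟩) t ht⟩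

end Diam

section Barrier

variable {ι : Type*} {P : Finset ι} {g : ι → ℝ → ℝ}

theorem eventually_slope_sup'_lt (hP : P.Nonempty) {d : ι → ℝ} {x r : ℝ}
    (hg : ∀ p ∈ P, HasDerivWithinAt (g p) (d p) (Ici x) x)
    (hr : ∀ p ∈ P, g p x = P.sup' hP (g · x) → d p < r) :
    ∀ᶠ z in 𝓝[>] x, slope (fun t => P.sup' hP (g · t)) x z < r := by
  have key : ∀ p ∈ P, ∀ᶠ z in 𝓝[>] x, g p z < P.sup' hP (g · x) + r * (z - x) := by
    intro p hp
    rcases (P.le_sup' (g · x) hp).eq_or_lt with hpx | hpx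
    · filter_upwards [(hg p hp).Ioi_of_Ici.limsup_slope_le' (lt_irrefl x) (hr p hp hpx),
        self_mem_nhdsWithin] with z hz hxz
      rw [slope_def_field, div_lt_iff₀ (sub_pos.2 hxz)] at hz
      linarith
    · have hlim : Tendsto (fun z => g p z - r * (z - x)) (𝓝[>] x) (𝓝 (g p x - r * (x - x))) :=
        (((hg p hp).continuousWithinAt.mono Ioi_subset_Ici_self).sub
          ((continuousWithinAt_id.sub continuousWithinAt_const).const_mul r)).tendsto
      filter_upwards [hlim.eventually_lt_const (by simpa using hpx)] with z hz
      linarith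
  filter_upwards [(eventually_all_finset P).2 key, self_mem_nhdsWithin] with z hz hxz
  rw [slope_def_field, div_lt_iff₀ (sub_pos.2 hxz)]
  linarith [(P.sup'_lt_iff hP).2 hz]

theorem image_le_of_deriv_neg_at_boundary {d : ι → ℝ → ℝ} {a c : ℝ}
    (hg : ∀ p ∈ P, ∀ t ≥ a, HasDerivWithinAt (g p) (d p t) (Ici a) t)
    (ha : ∀ p ∈ P, g p a ≤ c)
    (hd : ∀ t ≥ a, (∀ q ∈ P, g q t ≤ c) → ∀ p ∈ P, g p t = c → d p t < 0) :
    ∀ t ≥ a, ∀ p ∈ P, g p t ≤ c := by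
  intro t ht p hp
  have hP : P.Nonempty := ⟨p, hp⟩
  set f : ℝ → ℝ := fun u => P.sup' hP (g · u)
  have hactive : ∀ u, (P.filter fun q => g q u = f u).Nonempty := fun u => by
    obtain ⟨q, hq, hqu⟩ := P.exists_mem_eq_sup' hP (g · u)
    exact ⟨q, Finset.mem_filter.2 ⟨hq, hqu.symm⟩⟩
  -- the largest derivative among the functions realizing the maximum bounds its right Dini slope
  set f' : ℝ → ℝ := fun u => (P.filter fun q => g q u = f u).sup' (hactive u) (d · u)
  have hcont : ContinuousOn f (Icc a t) := ContinuousOn.finset_sup'_apply hP fun q hq u hu =>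
    (hg q hq u hu.1).continuousWithinAt.mono Icc_subset_Ici_self
  have hslope : ∀ u ∈ Ico a t, ∀ r, f' u < r → ∃ᶠ z in 𝓝[>] u, slope f u z < r :=
    fun u hu r hr => (eventually_slope_sup'_lt hP
      (fun q hq => (hg q hq u hu.1).mono (Ici_subset_Ici.2 hu.1))
      fun q hq hqu => (Finset.le_sup' (d · u) (Finset.mem_filter.2 ⟨hq, hqu⟩)).trans_lt hr
      ).frequently
  have hbound : ∀ u ∈ Ico a t, f u = c → f' u < 0 := fun u hu hfu =>
    (Finset.sup'_lt_iff _).2 fun q hq =>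
      hd u hu.1 (fun q' hq' => (P.le_sup' (g · u) hq').trans hfu.le) q
        (Finset.mem_filter.1 hq).1 ((Finset.mem_filter.1 hq).2.trans hfu)
  have hf : ∀ u ∈ Icc a t, f u ≤ c :=
    image_le_of_liminf_slope_right_lt_deriv_boundary' (B' := 0) hcont hslope
      (Finset.sup'_le hP _ ha) continuousOn_const (fun _ _ => hasDerivWithinAt_const _ _ _)
      hbound
  exact (P.le_sup' (g · t) hp).trans (hf t ⟨ht, le_rfl⟩)

end Barrier

section Estimates

variable {N : ℕ} {κ γ ℓ : ℝ} {A : Finset (Fin N)}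

theorem sin_sub_sub_sin (y ℓ : ℝ) : sin (y - ℓ) - sin y = -2 * sin (ℓ / 2) * cos (y - ℓ / 2) := by
  rw [sin_sub_sin, show (y - ℓ - y) / 2 = -(ℓ / 2) by ring,
    show (y - ℓ + y) / 2 = y - ℓ / 2 by ring, sin_neg]
  ring

theorem sin_eq_two_mul_sin_half_mul_cos_half (ℓ : ℝ) : sin ℓ = 2 * sin (ℓ / 2) * cos (ℓ / 2) := by
  rw [← sin_two_mul, mul_div_cancel₀ ℓ two_ne_zero]

theorem sin_sub_sub_sin_le_neg_sin {y : ℝ} (hℓ : ℓ ≤ 2 * π) (hy₀ : 0 ≤ y) (hyℓ : y ≤ ℓ) :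
    sin (y - ℓ) - sin y ≤ -sin ℓ := by
  have hsin : 0 ≤ sin (ℓ / 2) := sin_nonneg_of_nonneg_of_le_pi (by linarith) (by linarith)
  have hcos : cos (ℓ / 2) ≤ cos (y - ℓ / 2) := by
    rw [← cos_abs (y - ℓ / 2)]
    exact cos_le_cos_of_nonneg_of_le_pi (abs_nonneg _) (by linarith)
      (abs_le.2 ⟨by linarith, by linarith⟩)
  rw [sin_sub_sub_sin, sin_eq_two_mul_sin_half_mul_cos_half ℓ]
  nlinarith

theorem sin_sub_sub_sin_le (hℓ₀ : 0 ≤ ℓ) (hℓ : ℓ ≤ 2 * π) (y : ℝ) :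
    sin (y - ℓ) - sin y ≤ 2 * sin (ℓ / 2) := by
  have hsin : 0 ≤ sin (ℓ / 2) := sin_nonneg_of_nonneg_of_le_pi (by linarith) (by linarith)
  rw [sin_sub_sub_sin]
  nlinarith [neg_one_le_cos (y - ℓ / 2)]

theorem sum_sin_sub_sub_sin_le (hℓ₀ : 0 ≤ ℓ) (hℓ : ℓ ≤ 2 * π) (hcard : γ * N ≤ (A.card : ℝ))
    {y : Fin N → ℝ} (hy : ∀ j ∈ A, 0 ≤ y j ∧ y j ≤ ℓ) :
    ∑ j, (sin (y j - ℓ) - sin (y j)) ≤ -(N * lockingMargin γ ℓ) := by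
  have hA : ∑ j ∈ A, (sin (y j - ℓ) - sin (y j)) ≤ A.card * -sin ℓ := by
    simpa using Finset.sum_le_card_nsmul A _ _ fun j hj =>
      sin_sub_sub_sin_le_neg_sin hℓ (hy j hj).1 (hy j hj).2
  have hAc : ∑ j ∈ Aᶜ, (sin (y j - ℓ) - sin (y j)) ≤ Aᶜ.card * (2 * sin (ℓ / 2)) := by
    simpa using Finset.sum_le_card_nsmul Aᶜ _ _ fun j _ => sin_sub_sub_sin_le hℓ₀ hℓ (y j)
  have hN : (A.card : ℝ) + Aᶜ.card = N := by
    exact_mod_cast (Finset.card_add_card_compl A).trans (Fintype.card_fin N)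
  have hsum : 0 ≤ sin ℓ + 2 * sin (ℓ / 2) := by
    have := sin_nonneg_of_nonneg_of_le_pi (by linarith : 0 ≤ ℓ / 2) (by linarith)
    rw [sin_eq_two_mul_sin_half_mul_cos_half ℓ]
    nlinarith [neg_one_le_cos (ℓ / 2)]
  rw [← Finset.sum_add_sum_compl A, lockingMargin]
  linear_combination hA + hAc + 2 * sin (ℓ / 2) * hN + mul_nonneg (sub_nonneg.2 hcard) hsum

theorem kuramotoField_sub_le (hκ : 0 ≤ κ) (hℓ₀ : 0 ≤ ℓ) (hℓ : ℓ ≤ 2 * π)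
    (hcard : γ * N ≤ (A.card : ℝ)) {ν x : Fin N → ℝ} {i k : Fin N} {m : ℤ}
    (hik : x i - x k = ℓ + 2 * π * m) (hA : ∀ j ∈ A, x k ≤ x j ∧ x j ≤ x k + ℓ) :
    kuramotoField κ ν x i - kuramotoField κ ν x k ≤ ν i - ν k - κ * lockingMargin γ ℓ := by
  have hN : (N : ℝ) ≠ 0 := Nat.cast_ne_zero.2 (Fin.pos k).ne'
  have hsin : ∀ j, sin (x j - x i) = sin (x j - x k - ℓ) := fun j => by
    rw [show x j - x i = x j - x k - ℓ + (-m : ℤ) * (2 * π) by push_cast; linarith,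
      sin_add_int_mul_two_pi]
  have hsum := sum_sin_sub_sub_sin_le hℓ₀ hℓ hcard (y := fun j => x j - x k)
    fun j hj => ⟨by linarith [hA j hj], by linarith [hA j hj]⟩
  calc kuramotoField κ ν x i - kuramotoField κ ν x k
      = ν i - ν k + κ / N * ∑ j, (sin (x j - x k - ℓ) - sin (x j - x k)) := by
        simp only [kuramotoField, hsin, Finset.sum_sub_distrib]
        ring
    _ ≤ ν i - ν k + κ / N * -(N * lockingMargin γ ℓ) := by gcongr
    _ = ν i - ν k - κ * lockingMargin γ ℓ := by field_simp; ring

theorem lockingMargin_pos (hγ : 1 / 2 < γ) (hℓ : ℓ ∈ Ioo 0 (2 * arccos ((1 - γ) / γ))) :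
    0 < lockingMargin γ ℓ := by
  obtain ⟨hℓ₀, hℓ₁⟩ := hℓ
  have hγ₀ : 0 < γ := by linarith
  have hcos : (1 - γ) / γ < cos (ℓ / 2) := by
    have := cos_lt_cos_of_nonneg_of_le_pi (by linarith : 0 ≤ ℓ / 2)
      (arccos_le_pi ((1 - γ) / γ)) (by linarith)
    rwa [cos_arccos ((le_div_iff₀ hγ₀).2 (by linarith)) ((div_le_one hγ₀).2 (by linarith))]
      at this
  have hsin : 0 < sin (ℓ / 2) :=
    sin_pos_of_pos_of_lt_pi (by linarith) (by linarith [arccos_le_pi ((1 - γ) / γ)])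
  have hγcos : 0 < γ * cos (ℓ / 2) - (1 - γ) := by
    linarith [(div_lt_iff₀' hγ₀).1 hcos]
  rw [lockingMargin, sin_eq_two_mul_sin_half_mul_cos_half ℓ]
  nlinarith [mul_pos hsin hγcos]

theorem Finset.nonempty_of_mul_le_card (hγ : 0 < γ) (hcard : γ * N ≤ (A.card : ℝ)) (i : Fin N) :
    A.Nonempty :=
  Finset.card_pos.1 <| Nat.cast_pos.1 <|
    (mul_pos hγ (Nat.cast_pos.2 (Fin.pos i))).trans_le hcard

end Estimates

section Kuramoto

variable {N : ℕ} {κ γ ℓ : ℝ} {ν : Fin N → ℝ} {A : Finset (Fin N)} {θ : ℝ → Fin N → ℝ}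

theorem kuramotoField_neg (κ : ℝ) (ν x : Fin N → ℝ) (i : Fin N) :
    kuramotoField κ (-ν) (-x) i = -kuramotoField κ ν x i := by
  have hsin : ∀ j, sin (-x j - -x i) = -sin (x j - x i) := fun j => by
    rw [← sin_neg, neg_sub_neg, neg_sub]
  simp only [kuramotoField, Pi.neg_apply, hsin, Finset.sum_neg_distrib]
  ring

theorem IsKuramotoOn.neg (hθ : IsKuramotoOn κ ν θ) : IsKuramotoOn κ (-ν) (-θ) := fun i t ht => by
  change HasDerivWithinAt _ (kuramotoField κ (-ν) (-θ t) i) _ _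
  rw [kuramotoField_neg]
  exact (hθ i t ht).neg

theorem IsKuramotoOn.diam_le (hθ : IsKuramotoOn κ ν θ) (hκ : 0 ≤ κ) (hℓ₀ : 0 ≤ ℓ)
    (hℓ : ℓ ≤ 2 * π) (hcard : γ * N ≤ (A.card : ℝ)) (hν : diam A ν < κ * lockingMargin γ ℓ)
    (h0 : diam A (θ 0) ≤ ℓ) : ∀ t ≥ 0, diam A (θ t) ≤ ℓ := by
  have key : ∀ t ≥ 0, ∀ p ∈ A ×ˢ A, θ t p.1 - θ t p.2 ≤ ℓ := by
    refine image_le_of_deriv_neg_at_boundary (g := fun p t => θ t p.1 - θ t p.2)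
      (d := fun p t => kuramotoField κ ν (θ t) p.1 - kuramotoField κ ν (θ t) p.2)
      (fun p _ t ht => (hθ p.1 t ht).sub (hθ p.2 t ht))
      (fun p hp => (diam_le_iff hℓ₀).1 h0 _ (Finset.mem_product.1 hp).1 _
        (Finset.mem_product.1 hp).2) ?_
    rintro t - hle ⟨i, k⟩ hp heq
    obtain ⟨hi, hk⟩ := Finset.mem_product.1 hp
    have hA : ∀ j ∈ A, θ t k ≤ θ t j ∧ θ t j ≤ θ t k + ℓ := fun j hj =>
      ⟨by linarith [hle (i, j) (Finset.mem_product.2 ⟨hi, hj⟩)],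
        by linarith [hle (j, k) (Finset.mem_product.2 ⟨hj, hk⟩)]⟩
    have := kuramotoField_sub_le hκ hℓ₀ hℓ hcard (ν := ν) (m := 0) (by simpa using heq) hA
    linarith [sub_le_diam ν hi hk]
  exact fun t ht => (diam_le_iff hℓ₀).2 fun i hi j hj =>
    key t ht (i, j) (Finset.mem_product.2 ⟨hi, hj⟩)

theorem IsKuramotoOn.exists_sub_le (hθ : IsKuramotoOn κ ν θ) (hκ : 0 ≤ κ) (hℓ₀ : 0 ≤ ℓ)
    (hℓ : ℓ ≤ 2 * π) (hcard : γ * N ≤ (A.card : ℝ)) {i : Fin N}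
    (hν : ∀ k ∈ A, ν i - ν k < κ * lockingMargin γ ℓ) (hA : ∀ t ≥ 0, diam A (θ t) ≤ ℓ) :
    ∃ M, ∀ t ≥ 0, ∀ k ∈ A, θ t i - θ t k ≤ M := by
  obtain ⟨C, hC⟩ := (A.image fun k => θ 0 i - θ 0 k).bddAbove
  obtain ⟨m, hm⟩ := exists_int_gt ((C - ℓ) / (2 * π))
  have hCm : C ≤ ℓ + 2 * π * m := by
    linarith [(div_lt_iff₀ two_pi_pos).1 hm]
  refine ⟨ℓ + 2 * π * m, image_le_of_deriv_neg_at_boundary (g := fun k t => θ t i - θ t k)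
    (d := fun k t => kuramotoField κ ν (θ t) i - kuramotoField κ ν (θ t) k)
    (fun k _ t ht => (hθ i t ht).sub (hθ k t ht))
    (fun k hk => (hC (Finset.mem_coe.2 (Finset.mem_image_of_mem _ hk))).trans hCm) ?_⟩
  intro t ht hle k hk heq
  have hAk : ∀ j ∈ A, θ t k ≤ θ t j ∧ θ t j ≤ θ t k + ℓ := fun j hj =>
    ⟨by linarith [hle j hj], by linarith [(diam_le_iff hℓ₀).1 (hA t ht) j hj k hk]⟩
  linarith [kuramotoField_sub_le hκ hℓ₀ hℓ hcard (ν := ν) heq hAk, hν k hk]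

end Kuramoto

theorem majority_ensemble_partial_phase_locking_general (N : ℕ) (κ γ ℓ : ℝ)
    (hγ₁ : 1 / 2 < γ)
    (hℓ : ℓ ∈ Set.Ioo 0 (2 * Real.arccos ((1 - γ) / γ)))
    (ν : Fin N → ℝ) (A B : Finset (Fin N)) (hAB : A ⊆ B)
    (hcard : γ * N ≤ (A.card : ℝ))
    (hκ : diam B ν / (γ * Real.sin ℓ - 2 * (1 - γ) * Real.sin (ℓ / 2)) < κ)
    (θ : ℝ → Fin N → ℝ) (hθ : IsKuramotoOn κ ν θ)
    (h0 : diam A (θ 0) ≤ ℓ) :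
    ∃ M : ℝ, ∀ t ≥ (0 : ℝ), diam B (θ t) ≤ M := by
  have hF := lockingMargin_pos hγ₁ hℓ
  have hℓ₀ : 0 ≤ ℓ := hℓ.1.le
  have hℓ₂ : ℓ ≤ 2 * π := by linarith [hℓ.2, arccos_le_pi ((1 - γ) / γ)]
  have hνB : diam B ν < κ * lockingMargin γ ℓ := (div_lt_iff₀ hF).1 hκ
  have hκ₀ : 0 ≤ κ := (pos_of_mul_pos_left ((diam_nonneg B ν).trans_lt hνB) hF.le).le
  have hν : ∀ i ∈ B, ∀ j ∈ B, ν i - ν j < κ * lockingMargin γ ℓ := fun i hi j hj =>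
    (sub_le_diam ν hi hj).trans_lt hνB
  have hA := hθ.diam_le hκ₀ hℓ₀ hℓ₂ hcard ((diam_mono hAB ν).trans_lt hνB) h0
  have upper : ∀ i ∈ B, ∃ M, ∀ t ≥ 0, ∀ k ∈ A, θ t i - θ t k ≤ M := fun i hi =>
    hθ.exists_sub_le hκ₀ hℓ₀ hℓ₂ hcard (fun k hk => hν i hi k (hAB hk)) hA
  have lower : ∀ i ∈ B, ∃ M, ∀ t ≥ 0, ∀ k ∈ A, θ t k - θ t i ≤ M := fun i hi => by
    obtain ⟨M, hM⟩ := hθ.neg.exists_sub_le hκ₀ hℓ₀ hℓ₂ hcard (i := i)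
      (fun k hk => by simpa only [Pi.neg_apply, neg_sub_neg] using hν k (hAB hk) i hi)
      (by simpa [diam_neg] using hA)
    exact ⟨M, fun t ht k hk => by simpa only [Pi.neg_apply, neg_sub_neg] using hM t ht k hk⟩
  refine exists_forall_diam_le fun i hi j hj => ?_
  obtain ⟨a, ha⟩ := Finset.nonempty_of_mul_le_card (by linarith) hcard i
  obtain ⟨M₁, hM₁⟩ := upper i hi
  obtain ⟨M₂, hM₂⟩ := lower j hj
  exact ⟨M₁ + M₂, fun t ht => by linarith [hM₁ t ht a ha, hM₂ t ht a ha]⟩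

/-- Partial phase-locking of the ensemble `B` (Theorem 3.1 (2)): under the
conditions guaranteeing stability of the majority ensemble `A`, the phase
diameter of the larger ensemble `B` stays uniformly bounded on `[0,∞)`. -/
theorem majority_ensemble_partial_phase_locking (N : ℕ) (hN : 1 ≤ N) (κ γ ℓ : ℝ)
    (hγ₁ : 1 / 2 < γ) (hγ₂ : γ ≤ 1)
    (hℓ : ℓ ∈ Set.Ioo 0 (2 * Real.arccos ((1 - γ) / γ)))
    (ν : Fin N → ℝ) (A B : Finset (Fin N)) (hAB : A ⊆ B)
    (hcard : γ * N ≤ (A.card : ℝ))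
    (hκ : diam B ν / (γ * Real.sin ℓ - 2 * (1 - γ) * Real.sin (ℓ / 2)) < κ)
    (θ : ℝ → Fin N → ℝ) (hθ : IsKuramotoOn κ ν θ)
    (h0 : diam A (θ 0) ≤ ℓ) :
    ∃ M : ℝ, ∀ t ≥ (0 : ℝ), diam B (θ t) ≤ M :=
  majority_ensemble_partial_phase_locking_general N κ γ ℓ hγ₁ hℓ ν A B hAB hcard hκ θ hθ h0
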